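/- arXiv:1601.04173 — 2 statements merged into one kernel-verified Lean document; each statement's English description precedes it below -/
import Mathlib

section
/- Let (T(t))_{t≥0} be a strongly continuous semigroup on a Banach space X with generator A. For every λ ∈ ℂ and t > 0, the analytic core satisfies K(e^{λt}·I − T(t)) ⊆ K(λ·I − A), and the algebraic core satisfies C(e^{λt}·I − T(t)) ⊆ C(λ·I − A). -/
open Filter Topology MeasureTheory intervalIntegral

/-- A strongly continuous semigroup of bounded operators on a Banach space `X`. -/
structure C0Semigroup (X : Type*) [NormedAddCommGroup X] [NormedSpace ℂ X] where
  /-- the family of bounded operators -/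
  T : ℝ → X →L[ℂ] X
  map_zero' : T 0 = 1
  map_add' : ∀ s t : ℝ, 0 ≤ s → 0 ≤ t → T (s + t) = T s ∘L T t
  strong_cont' : ∀ x : X, ContinuousOn (fun t => T t x) (Set.Ici (0 : ℝ))

namespace C0Semigroup

variable {X : Type*} [NormedAddCommGroup X] [NormedSpace ℂ X]

/-- The domain of the infinitesimal generator. -/
def genDomain (S : C0Semigroup X) : Set X :=
  {x | ∃ y : X, Tendsto (fun t : ℝ => t⁻¹ • (S.T t x - x)) (𝓝[>] 0) (𝓝 y)}

/-- `A : X → X` (total function, with junk values outside `D`) together with `D` is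
*the* infinitesimal generator of `S` if `D` is exactly the set where the right
derivative of `t ↦ T(t)x` exists at `0`, and `A x` is that derivative for `x ∈ D`. -/
def IsGenerator (S : C0Semigroup X) (A : X → X) (D : Set X) : Prop :=
  D = S.genDomain ∧
    ∀ x ∈ D, Tendsto (fun t : ℝ => t⁻¹ • (S.T t x - x)) (𝓝[>] 0) (𝓝 (A x))

end C0Semigroup

/-!
Write `B(λ,t)x = ∫₀ᵗ e^{λ(t−r)} T(r)x dr`. Differentiating
`s ↦ T(s)B(λ,t)x = e^{λs} ∫ₛ^{t+s} e^{λ(t−r)} T(r)x dr` from the right at `s = 0` shows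
`B(λ,t)x ∈ D(A)` and `(λ − A)B(λ,t)x = (e^{λt} − T(t))x`. As `B(λ,t)` is bounded and commutes
with `T(t)`, a backward orbit `(xₙ)` of `e^{λt} − T(t)` yields the backward orbit
`yₙ = B(λ,t)ⁿxₙ` of `λ − A`, and `‖yₙ‖ ≤ (‖B(λ,t)‖δ)ⁿ‖x‖`.
-/

theorem ContinuousLinearMap.norm_pow_apply_le {𝕜 E : Type*} [NontriviallyNormedField 𝕜]
    [SeminormedAddCommGroup E] [NormedSpace 𝕜 E] (f : E →L[𝕜] E) (n : ℕ) (x : E) :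
    ‖(f ^ n) x‖ ≤ ‖f‖ ^ n * ‖x‖ := by
  induction n with
  | zero => simp
  | succ n ih =>
    rw [pow_succ', mul_apply_eq_comp, pow_succ', mul_assoc]
    exact f.le_opNorm_of_le ih

namespace C0Semigroup

variable {X : Type*} [NormedAddCommGroup X] [NormedSpace ℂ X] (S : C0Semigroup X)

theorem T_add_apply {s r : ℝ} (hs : 0 ≤ s) (hr : 0 ≤ r) (x : X) :
    S.T (s + r) x = S.T s (S.T r x) := by
  rw [S.map_add' s r hs hr, ContinuousLinearMap.comp_apply]

theorem T_comm_apply {s r : ℝ} (hs : 0 ≤ s) (hr : 0 ≤ r) (x : X) :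
    S.T s (S.T r x) = S.T r (S.T s x) := by
  rw [← S.T_add_apply hs hr, add_comm, S.T_add_apply hr hs]

theorem exists_norm_T_le [CompleteSpace X] (t : ℝ) :
    ∃ C, ∀ r ∈ Set.Icc (0 : ℝ) t, ‖S.T r‖ ≤ C := by
  have horbit_bdd : ∀ x : X, ∃ M, ∀ r : Set.Icc (0 : ℝ) t, ‖S.T r x‖ ≤ M := fun x ↦
    let ⟨M, hM⟩ := isCompact_Icc.exists_bound_of_continuousOn
      ((S.strong_cont' x).mono Set.Icc_subset_Ici_self)
    ⟨M, fun r ↦ hM r r.2⟩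
  obtain ⟨C, hC⟩ := banach_steinhaus horbit_bdd
  exact ⟨C, fun r hr ↦ hC ⟨r, hr⟩⟩

noncomputable def expOrbit (l : ℂ) (t : ℝ) (x : X) (r : ℝ) : X :=
  Complex.exp (l * (t - r)) • S.T r x

variable (l : ℂ) {t : ℝ}

theorem continuousOn_expOrbit (x : X) : ContinuousOn (S.expOrbit l t x) (Set.Ici 0) :=
  (Continuous.continuousOn (by fun_prop)).smul (S.strong_cont' x)

theorem intervalIntegrable_expOrbit (x : X) {a b : ℝ} (ha : 0 ≤ a) (hb : 0 ≤ b) :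
    IntervalIntegrable (S.expOrbit l t x) volume a b :=
  (S.continuousOn_expOrbit l x).mono (fun _ hr ↦ (le_min ha hb).trans hr.1)
    |>.intervalIntegrable

variable [CompleteSpace X]

theorem exists_norm_expOrbit_le :
    ∃ M, ∀ x : X, ∀ r ∈ Set.Icc (0 : ℝ) t, ‖S.expOrbit l t x r‖ ≤ M * ‖x‖ := by
  obtain ⟨C, hC⟩ := S.exists_norm_T_le t
  obtain ⟨E, hE⟩ := isCompact_Icc.exists_bound_of_continuousOn
    (f := fun r : ℝ ↦ Complex.exp (l * (t - r))) (Continuous.continuousOn (by fun_prop))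
  refine ⟨max E 0 * C, fun x r hr ↦ ?_⟩
  calc ‖S.expOrbit l t x r‖ = ‖Complex.exp (l * (t - r))‖ * ‖S.T r x‖ := norm_smul _ _
    _ ≤ max E 0 * (C * ‖x‖) :=
      mul_le_mul ((hE r hr).trans (le_max_left _ _)) ((S.T r).le_of_opNorm_le (hC r hr) x)
        (norm_nonneg _) (le_max_right _ _)
    _ = max E 0 * C * ‖x‖ := by ring

/-- The operator `B(λ,t)`. -/
noncomputable def expIntegral (ht : 0 ≤ t) : X →L[ℂ] X :=
  LinearMap.mkContinuousOfExistsBound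
    { toFun x := ∫ r in (0 : ℝ)..t, S.expOrbit l t x r
      map_add' x y := by
        rw [← intervalIntegral.integral_add (S.intervalIntegrable_expOrbit l x le_rfl ht)
          (S.intervalIntegrable_expOrbit l y le_rfl ht)]
        simp only [expOrbit, map_add, smul_add]
      map_smul' c x := by
        rw [RingHom.id_apply, ← intervalIntegral.integral_smul]
        simp only [expOrbit, map_smul, smul_comm c] }
    (by
      obtain ⟨M, hM⟩ := S.exists_norm_expOrbit_le l (t := t)
      refine ⟨M * t, fun x ↦ ?_⟩
      have := intervalIntegral.norm_integral_le_of_norm_le_const fun r hr ↦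
        hM x r (Set.Ioc_subset_Icc_self (Set.uIoc_of_le ht ▸ hr))
      simpa [abs_of_nonneg ht, mul_right_comm] using this)

theorem expIntegral_apply (ht : 0 ≤ t) (x : X) :
    S.expIntegral l ht x = ∫ r in (0 : ℝ)..t, S.expOrbit l t x r := rfl

theorem commute_T_expIntegral (ht : 0 ≤ t) {s : ℝ} (hs : 0 ≤ s) :
    Commute (S.T s) (S.expIntegral l ht) := by
  ext x
  simp only [mul_apply_eq_comp, expIntegral_apply]
  rw [← (S.T s).intervalIntegral_comp_comm (S.intervalIntegrable_expOrbit l x le_rfl ht)]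
  refine intervalIntegral.integral_congr fun r hr ↦ ?_
  rw [Set.uIcc_of_le ht] at hr
  simp only [expOrbit, map_smul, S.T_comm_apply hs hr.1]

theorem T_apply_expIntegral (ht : 0 ≤ t) {s : ℝ} (hs : 0 ≤ s) (x : X) :
    S.T s (S.expIntegral l ht x) =
      Complex.exp (l * s) • ∫ r in s..t + s, S.expOrbit l t x r := by
  have hshift := intervalIntegral.integral_comp_add_right (a := 0) (b := t) (S.expOrbit l t x) s
  rw [zero_add] at hshift
  rw [expIntegral_apply, ← (S.T s).intervalIntegral_comp_comm
    (S.intervalIntegrable_expOrbit l x le_rfl ht), ← hshift, ← intervalIntegral.integral_smul]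
  refine intervalIntegral.integral_congr fun r hr ↦ ?_
  rw [Set.uIcc_of_le ht] at hr
  simp only [expOrbit, map_smul, smul_smul, ← Complex.exp_add, add_comm r s,
    S.T_add_apply hs hr.1]
  congr 2
  push_cast
  ring

theorem hasDerivWithinAt_integral_expOrbit (x : X) {u : ℝ} (hu : 0 ≤ u) :
    HasDerivWithinAt (fun v ↦ ∫ r in (0 : ℝ)..v, S.expOrbit l t x r) (S.expOrbit l t x u)
      (Set.Ici u) u :=
  have hcont : ContinuousOn (S.expOrbit l t x) (Set.Ici u) :=
    (S.continuousOn_expOrbit l x).mono (Set.Ici_subset_Ici.mpr hu)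
  intervalIntegral.integral_hasDerivWithinAt_right
    (S.intervalIntegrable_expOrbit l x le_rfl hu)
    ((hcont.mono Set.Ioi_subset_Ici_self).stronglyMeasurableAtFilter_nhdsWithin
      measurableSet_Ioi u)
    ((hcont u Set.self_mem_Ici).mono Set.Ioi_subset_Ici_self)

theorem hasDerivWithinAt_T_apply_expIntegral (ht : 0 ≤ t) (x : X) :
    HasDerivWithinAt (fun s ↦ S.T s (S.expIntegral l ht x))
      (l • S.expIntegral l ht x - (Complex.exp (l * t) • x - S.T t x)) (Set.Ici 0) 0 := by
  set G := fun v ↦ ∫ r in (0 : ℝ)..v, S.expOrbit l t x r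
  have hexp : HasDerivAt (fun s : ℝ ↦ Complex.exp (l * s)) l 0 := by
    simpa using (((hasDerivAt_id (0 : ℂ)).const_mul l).cexp).comp_ofReal
  have hGshift : HasDerivWithinAt (fun s ↦ G (t + s)) (S.expOrbit l t x t) (Set.Ici 0) 0 := by
    have hcomp := (S.hasDerivWithinAt_integral_expOrbit l (t := t) x ht).scomp_of_eq 0
      ((hasDerivAt_id 0).const_add t).hasDerivWithinAt
      (fun s (hs : s ∈ Set.Ici (0 : ℝ)) ↦ Set.mem_Ici.mpr (le_add_of_nonneg_right hs))
      (add_zero t).symm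
    rwa [one_smul] at hcomp
  have hprod := hexp.hasDerivWithinAt.smul
    (hGshift.sub (S.hasDerivWithinAt_integral_expOrbit l (t := t) x le_rfl))
  refine (hprod.congr_of_mem (fun s hs ↦ ?_) Set.self_mem_Ici).congr_deriv ?_
  · simp only [S.T_apply_expIntegral l ht hs, G, Pi.smul_apply', Pi.sub_apply]
    rw [intervalIntegral.integral_interval_sub_left
      (S.intervalIntegrable_expOrbit l x le_rfl (by linarith [Set.mem_Ici.mp hs]))
      (S.intervalIntegrable_expOrbit l x le_rfl hs)]
  · simp only [G, expOrbit, expIntegral_apply, Pi.sub_apply, add_zero, sub_self, sub_zero,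
      intervalIntegral.integral_same, Complex.ofReal_zero, mul_zero, Complex.exp_zero, one_smul,
      S.map_zero', one_apply_eq_self]
    abel

theorem tendsto_T_apply_expIntegral (ht : 0 ≤ t) (x : X) :
    Tendsto (fun s : ℝ ↦ s⁻¹ • (S.T s (S.expIntegral l ht x) - S.expIntegral l ht x)) (𝓝[>] 0)
      (𝓝 (l • S.expIntegral l ht x - (Complex.exp (l * t) • x - S.T t x))) := by
  have hderiv := (S.hasDerivWithinAt_T_apply_expIntegral l ht x).mono Set.Ioi_subset_Ici_self
  rw [hasDerivWithinAt_iff_tendsto_slope' Set.self_notMem_Ioi] at hderiv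
  simpa [slope_fun_def, S.map_zero'] using hderiv

variable {S} {A : X → X} {D : Set X}

theorem IsGenerator.expIntegral_mem (hgen : S.IsGenerator A D) (ht : 0 ≤ t) (x : X) :
    S.expIntegral l ht x ∈ D :=
  hgen.1 ▸ ⟨_, S.tendsto_T_apply_expIntegral l ht x⟩

theorem IsGenerator.smul_sub_apply_expIntegral (hgen : S.IsGenerator A D) (ht : 0 ≤ t) (x : X) :
    l • S.expIntegral l ht x - A (S.expIntegral l ht x) = Complex.exp (l * t) • x - S.T t x := by
  rw [tendsto_nhds_unique (hgen.2 _ (hgen.expIntegral_mem l ht x))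
    (S.tendsto_T_apply_expIntegral l ht x)]
  abel

theorem IsGenerator.pow_expIntegral_apply_backward (hgen : S.IsGenerator A D) (ht : 0 ≤ t)
    {u : ℕ → X} (hu : ∀ n, 1 ≤ n → Complex.exp (l * t) • u n - S.T t (u n) = u (n - 1))
    {n : ℕ} (hn : 1 ≤ n) :
    (S.expIntegral l ht ^ n) (u n) ∈ D ∧
      l • (S.expIntegral l ht ^ n) (u n) - A ((S.expIntegral l ht ^ n) (u n)) =
        (S.expIntegral l ht ^ (n - 1)) (u (n - 1)) := by
  obtain ⟨m, rfl⟩ := Nat.exists_eq_add_of_le' hn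
  have hcomm : S.T t ((S.expIntegral l ht ^ m) (u (m + 1))) =
      (S.expIntegral l ht ^ m) (S.T t (u (m + 1))) := by
    simpa only [mul_apply_eq_comp] using
      DFunLike.congr_fun ((S.commute_T_expIntegral l ht ht).pow_right m).eq (u (m + 1))
  have hstep : Complex.exp (l * t) • u (m + 1) - S.T t (u (m + 1)) = u m := hu (m + 1) hn
  rw [pow_succ', mul_apply_eq_comp, Nat.add_sub_cancel, ← hstep]
  refine ⟨hgen.expIntegral_mem l ht _, ?_⟩
  rw [hgen.smul_sub_apply_expIntegral, hcomm, map_sub, map_smul]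

end C0Semigroup

/-- Lemma 2.3: for every `λ ∈ ℂ` and `t > 0`, the analytic core satisfies
`K(e^{λt} I − T(t)) ⊆ K(λ I − A)` and the algebraic core satisfies
`C(e^{λt} I − T(t)) ⊆ C(λ I − A)`. -/
theorem stmt12 {X : Type*} [NormedAddCommGroup X] [NormedSpace ℂ X] [CompleteSpace X]
    (S : C0Semigroup X) (A : X → X) (D : Set X) (hgen : S.IsGenerator A D)
    (l : ℂ) (t : ℝ) (ht : 0 < t) :
    ({x : X | ∃ u : ℕ → X, ∃ δ : ℝ, 0 < δ ∧ u 0 = x ∧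
        (∀ n : ℕ, 1 ≤ n → Complex.exp (l * t) • u n - S.T t (u n) = u (n - 1)) ∧
        ∀ n : ℕ, ‖u n‖ ≤ δ ^ n * ‖x‖}
      ⊆ {x : X | ∃ u : ℕ → X, ∃ δ : ℝ, 0 < δ ∧ u 0 = x ∧
        (∀ n : ℕ, 1 ≤ n → u n ∈ D ∧ l • u n - A (u n) = u (n - 1)) ∧
        ∀ n : ℕ, ‖u n‖ ≤ δ ^ n * ‖x‖}) ∧
    ({x : X | ∃ u : ℕ → X, u 0 = x ∧
        ∀ n : ℕ, 1 ≤ n → Complex.exp (l * t) • u n - S.T t (u n) = u (n - 1)}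
      ⊆ {x : X | ∃ u : ℕ → X, u 0 = x ∧
        ∀ n : ℕ, 1 ≤ n → u n ∈ D ∧ l • u n - A (u n) = u (n - 1)}) := by
  set B := S.expIntegral l ht.le
  refine ⟨?_, ?_⟩
  · rintro x ⟨u, δ, hδ, hu0, hu, hnorm⟩
    refine ⟨fun n ↦ (B ^ n) (u n), (‖B‖ + 1) * δ, by positivity, by simp [hu0],
      fun n hn ↦ hgen.pow_expIntegral_apply_backward l ht.le hu hn, fun n ↦ ?_⟩
    calc ‖(B ^ n) (u n)‖ ≤ ‖B‖ ^ n * (δ ^ n * ‖x‖) :=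
          (B.norm_pow_apply_le n (u n)).trans (by gcongr; exact hnorm n)
      _ ≤ ((‖B‖ + 1) * δ) ^ n * ‖x‖ := by
          rw [mul_pow, mul_assoc]
          gcongr
          linarith
  · rintro x ⟨u, hu0, hu⟩
    exact ⟨fun n ↦ (B ^ n) (u n), by simp [hu0],
      fun n hn ↦ hgen.pow_expIntegral_apply_backward l ht.le hu hn⟩
end

section
/- Let (T(t))_{t≥0} be a strongly continuous semigroup on a Banach space X with generator A, and suppose λ ∈ ℂ is an approximate eigenvalue of A (i.e., there exist unit vectors xₙ ∈ D(A) with ‖(λ·I − A)xₙ‖ → 0). Then for every t > 0, e^{λt} is an approximate eigenvalue of T(t), i.e., ‖(e^{λt}·I − T(t))xₙ‖ → 0 for the same sequence. -/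
open Filter Topology MeasureTheory intervalIntegral

/-!
For `x ∈ D(A)` the map `s ↦ e^{λ(t-s)} T(s) x` has right derivative
`-e^{λ(t-s)} T(s) (λ - A) x`, so `e^{λt} x - T(t) x = ∫₀ᵗ e^{λ(t-s)} T(s) (λ - A) x ds`.
By the uniform boundedness principle `T` is bounded on `[0, t]`, hence
`‖e^{λt} x - T(t) x‖ ≤ c_t ‖(λ - A) x‖` with `c_t` independent of `x`, and the right-hand side
tends to zero along an approximate eigenvector sequence.
-/

theorem hasDerivAt_cexp_mul_sub (l : ℂ) (t r : ℝ) :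
    HasDerivAt (fun r : ℝ => Complex.exp (l * (t - r))) (-l * Complex.exp (l * (t - r))) r := by
  have := (((hasDerivAt_id r).ofReal_comp.const_sub (t : ℂ)).const_mul l).cexp
  convert this using 1 <;> simp [mul_comm]

namespace C0Semigroup

variable {X : Type*} [NormedAddCommGroup X] [NormedSpace ℂ X] (S : C0Semigroup X)

theorem exists_norm_T_le_on_Icc [CompleteSpace X] (t : ℝ) :
    ∃ C, ∀ s ∈ Set.Icc 0 t, ‖S.T s‖ ≤ C := by
  obtain ⟨C, hC⟩ : ∃ C, ∀ s : Set.Icc (0 : ℝ) t, ‖S.T s‖ ≤ C := by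
    refine banach_steinhaus fun v => ?_
    obtain ⟨B, hB⟩ := isCompact_Icc.exists_bound_of_continuousOn
      ((S.strong_cont' v).mono Set.Icc_subset_Ici_self)
    exact ⟨B, fun s => hB s s.2⟩
  exact ⟨C, fun s hs => hC ⟨s, hs⟩⟩

theorem T_eq_comp_T_sub {s r : ℝ} (hs : 0 ≤ s) (hsr : s ≤ r) :
    S.T r = S.T s ∘L S.T (r - s) := by
  simpa using S.map_add' s (r - s) hs (sub_nonneg.2 hsr)

theorem hasDerivWithinAt_orbit {x y : X}
    (hx : Tendsto (fun t : ℝ => t⁻¹ • (S.T t x - x)) (𝓝[>] 0) (𝓝 y)) {s : ℝ} (hs : 0 ≤ s) :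
    HasDerivWithinAt (fun r => S.T r x) (S.T s y) (Set.Ioi s) s := by
  have h0 : HasDerivWithinAt (fun r => S.T r x) y (Set.Ioi 0) 0 := by
    rw [hasDerivWithinAt_iff_tendsto_slope, Set.sdiff_singleton_eq_self Set.self_notMem_Ioi]
    exact hx.congr fun t => by simp [slope_def_module, S.map_zero']
  have hshift : HasDerivWithinAt (fun r => S.T (r - s) x) y (Set.Ioi s) s := by
    have hsub : HasDerivWithinAt (fun r : ℝ => r - s) 1 (Set.Ioi s) s :=
      ((hasDerivAt_id s).sub_const s).hasDerivWithinAt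
    have := h0.scomp_of_eq s hsub (fun r hr => Set.mem_Ioi.2 (sub_pos.2 hr)) (sub_self s).symm
    rwa [one_smul] at this
  refine (((S.T s).restrictScalars ℝ).hasFDerivAt.comp_hasDerivWithinAt s hshift).congr
    (fun r hr => ?_) ?_
  · simp [S.T_eq_comp_T_sub hs hr.le]
  · simp [S.map_zero']

theorem exp_smul_sub_T_eq_integral [CompleteSpace X] {x y : X}
    (hx : Tendsto (fun t : ℝ => t⁻¹ • (S.T t x - x)) (𝓝[>] 0) (𝓝 y)) (l : ℂ) {t : ℝ}
    (ht : 0 ≤ t) :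
    Complex.exp (l * t) • x - S.T t x
      = ∫ s in (0 : ℝ)..t, Complex.exp (l * (t - s)) • S.T s (l • x - y) := by
  have hderiv : ∀ r ∈ Set.Ioo 0 t,
      HasDerivWithinAt (fun r : ℝ => Complex.exp (l * (t - r)) • S.T r x)
        (-(Complex.exp (l * (t - r)) • S.T r (l • x - y))) (Set.Ioi r) r := by
    intro r hr
    refine ((hasDerivAt_cexp_mul_sub l t r).hasDerivWithinAt.smul
      (S.hasDerivWithinAt_orbit hx hr.1.le)).congr_deriv ?_
    simp only [map_sub, map_smul]
    module
  have hcont_exp : Continuous fun r : ℝ => Complex.exp (l * (t - r)) := by fun_prop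
  have hcont_orbit (v : X) : ContinuousOn (fun r => S.T r v) (Set.Icc 0 t) :=
    (S.strong_cont' v).mono Set.Icc_subset_Ici_self
  have hint : IntervalIntegrable (fun r => -(Complex.exp (l * (t - r)) • S.T r (l • x - y)))
      volume 0 t :=
    (hcont_exp.continuousOn.smul (hcont_orbit _)).neg.intervalIntegrable_of_Icc ht
  have hFTC := integral_eq_sub_of_hasDeriv_right_of_le ht
    (hcont_exp.continuousOn.smul (hcont_orbit x)) hderiv hint
  rw [intervalIntegral.integral_neg, neg_eq_iff_eq_neg] at hFTC
  rw [hFTC]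
  simp [S.map_zero']

theorem norm_exp_smul_sub_T_le [CompleteSpace X] {x y : X}
    (hx : Tendsto (fun t : ℝ => t⁻¹ • (S.T t x - x)) (𝓝[>] 0) (𝓝 y)) (l : ℂ) {t C : ℝ}
    (ht : 0 ≤ t) (hC : ∀ s ∈ Set.Icc 0 t, ‖S.T s‖ ≤ C) :
    ‖Complex.exp (l * t) • x - S.T t x‖ ≤ t * (Real.exp (‖l‖ * t) * C) * ‖l • x - y‖ := by
  have hbound : ∀ s ∈ Set.uIoc 0 t, ‖Complex.exp (l * (t - s)) • S.T s (l • x - y)‖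
      ≤ Real.exp (‖l‖ * t) * C * ‖l • x - y‖ := by
    intro s hs
    rw [Set.uIoc_of_le ht] at hs
    have hexp : ‖Complex.exp (l * (t - s))‖ ≤ Real.exp (‖l‖ * t) := calc
      _ ≤ Real.exp ‖l * (t - s)‖ := Complex.norm_exp_le_exp_norm _
      _ ≤ Real.exp (‖l‖ * t) := by
        gcongr
        rw [norm_mul, ← Complex.ofReal_sub, Complex.norm_real, Real.norm_of_nonneg]
        · gcongr; linarith [hs.1]
        · linarith [hs.2]
    rw [norm_smul, mul_assoc]
    exact mul_le_mul hexp ((S.T s).le_of_opNorm_le (hC s (Set.Ioc_subset_Icc_self hs)) _)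
      (by positivity) (by positivity)
  rw [S.exp_smul_sub_T_eq_integral hx l ht]
  calc _ ≤ _ := norm_integral_le_of_norm_le_const hbound
    _ = _ := by rw [sub_zero, abs_of_nonneg ht]; ring

end C0Semigroup

theorem stmt18_general {X : Type*} [NormedAddCommGroup X] [NormedSpace ℂ X] [CompleteSpace X]
    (S : C0Semigroup X) (A : X → X) (D : Set X) (hgen : S.IsGenerator A D)
    (l : ℂ) (x : ℕ → X) (hxD : ∀ n, x n ∈ D)
    (happrox : Tendsto (fun n => ‖l • x n - A (x n)‖) atTop (𝓝 0)) :
    ∀ t : ℝ, 0 < t →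
      Tendsto (fun n => ‖Complex.exp (l * t) • x n - S.T t (x n)‖) atTop (𝓝 0) := by
  intro t ht
  obtain ⟨C, hC⟩ := S.exists_norm_T_le_on_Icc t
  have hbound (n : ℕ) := S.norm_exp_smul_sub_T_le (hgen.2 _ (hxD n)) l ht.le hC
  refine squeeze_zero (fun n => norm_nonneg _) hbound ?_
  simpa using happrox.const_mul (t * (Real.exp (‖l‖ * t) * C))

/-- Forward spectral inclusion for the approximate point spectrum (Theorem 2.2):
if `xₙ ∈ D(A)` are unit vectors with `‖(λ I − A) xₙ‖ → 0`, then for every `t > 0`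
we have `‖(e^{λt} I − T(t)) xₙ‖ → 0` for the same sequence. -/
theorem stmt18 {X : Type*} [NormedAddCommGroup X] [NormedSpace ℂ X] [CompleteSpace X]
    (S : C0Semigroup X) (A : X → X) (D : Set X) (hgen : S.IsGenerator A D)
    (l : ℂ) (x : ℕ → X) (hxD : ∀ n, x n ∈ D) (hxnorm : ∀ n, ‖x n‖ = 1)
    (happrox : Tendsto (fun n => ‖l • x n - A (x n)‖) atTop (𝓝 0)) :
    ∀ t : ℝ, 0 < t →
      Tendsto (fun n => ‖Complex.exp (l * t) • x n - S.T t (x n)‖) atTop (𝓝 0) :=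
  stmt18_general S A D hgen l x hxD happrox
end
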